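/- Fix η ∈ ℝ, labels y with y i ∈ {0,1} for all i and Σᵢ y i > 0, and predictions ŷ with ŷ i ≠ −η for all i. Then as β → +∞, the sigmoidF1 score 2·t̃p(β)/(2·t̃p(β) + f̃n(β) + f̃p(β)) converges to the hard F1 score 2·tp/(2·tp + fn + fp) computed with threshold t = −η (the denominator of the hard F1 is positive since tp + fn = Σᵢ y i > 0). -/

import Mathlib

noncomputable def S (u β η : ℝ) : ℝ := 1 / (1 + Real.exp (-β * (u + η)))

/-!
As `β → ∞`, each sigmoid `S (ŷ i) β η` tends to the hard indicator `[ŷ i ≥ -η]`, because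
`ŷ i + η ≠ 0`. The F1 score is a rational function of the (soft or hard) predictions, continuous
wherever its denominator is nonzero, and at the hard indicators the denominator is at least
`∑ i, y i > 0`.
-/

open Filter Topology Finset

theorem tendsto_S_atTop {u η : ℝ} (hu : u ≠ -η) :
    Tendsto (fun β : ℝ => S u β η) atTop (𝓝 (if u ≥ -η then 1 else 0)) := by
  rcases hu.lt_or_gt with hlt | hgt
  · have hden : Tendsto (fun β : ℝ => 1 + Real.exp (-β * (u + η))) atTop atTop :=
      tendsto_atTop_add_const_left _ 1 <| Real.tendsto_exp_atTop.comp <|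
        tendsto_neg_atTop_atBot.atBot_mul_const_of_neg (by linarith : u + η < 0)
    rw [if_neg (not_le.2 hlt)]
    simp only [S, one_div]
    exact hden.inv_tendsto_atTop
  · have hden : Tendsto (fun β : ℝ => 1 + Real.exp (-β * (u + η))) atTop (𝓝 (1 + 0)) :=
      tendsto_const_nhds.add <| Real.tendsto_exp_atBot.comp <|
        tendsto_neg_atTop_atBot.atBot_mul_const (by linarith : 0 < u + η)
    rw [if_pos hgt.le]
    simpa only [S, one_div, add_zero, inv_one] using hden.inv₀ (by norm_num)

section F1

variable {ι : Type*} [Fintype ι]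

/-- `c i ∈ [0, 1]` is the soft or hard prediction for example `i`; the three sums are
`tp`, `fn` and `fp`. -/
noncomputable def f1Score (y c : ι → ℝ) : ℝ :=
  2 * (∑ i, c i * y i) / (2 * (∑ i, c i * y i) + (∑ i, (1 - c i) * y i) + (∑ i, c i * (1 - y i)))

theorem f1Score_denom_pos {y c : ι → ℝ} (hc : ∀ i, 0 ≤ c i) (hy₀ : ∀ i, 0 ≤ y i)
    (hy₁ : ∀ i, y i ≤ 1) (hpos : 0 < ∑ i, y i) :
    0 < 2 * (∑ i, c i * y i) + (∑ i, (1 - c i) * y i) + (∑ i, c i * (1 - y i)) := by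
  have htp_fn : (∑ i, c i * y i) + (∑ i, (1 - c i) * y i) = ∑ i, y i := by
    rw [← sum_add_distrib]; exact sum_congr rfl fun i _ => by ring
  have htp : 0 ≤ ∑ i, c i * y i := sum_nonneg fun i _ => mul_nonneg (hc i) (hy₀ i)
  have hfp : 0 ≤ ∑ i, c i * (1 - y i) :=
    sum_nonneg fun i _ => mul_nonneg (hc i) (sub_nonneg.2 (hy₁ i))
  linarith

theorem continuousAt_f1Score (y : ι → ℝ) {c : ι → ℝ}
    (hden : 2 * (∑ i, c i * y i) + (∑ i, (1 - c i) * y i) + (∑ i, c i * (1 - y i)) ≠ 0) :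
    ContinuousAt (f1Score y) c := by
  unfold f1Score
  fun_prop (disch := exact hden)

end F1

theorem sigmoidF1_tendsto_hardF1 (n : ℕ) (yhat y : Fin n → ℝ) (η : ℝ)
    (hy : ∀ i, y i = 0 ∨ y i = 1) (hpos : 0 < ∑ i, y i)
    (hne : ∀ i, yhat i ≠ -η) :
    Filter.Tendsto
      (fun β : ℝ =>
        2 * (∑ i, S (yhat i) β η * y i) /
          (2 * (∑ i, S (yhat i) β η * y i) + (∑ i, (1 - S (yhat i) β η) * y i) +
            (∑ i, S (yhat i) β η * (1 - y i))))
      Filter.atTop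
      (nhds (2 * (∑ i, (if yhat i ≥ -η then (1:ℝ) else 0) * y i) /
        (2 * (∑ i, (if yhat i ≥ -η then (1:ℝ) else 0) * y i) +
          (∑ i, (if yhat i < -η then (1:ℝ) else 0) * y i) +
          (∑ i, (if yhat i ≥ -η then (1:ℝ) else 0) * (1 - y i))))) := by
  set hard : Fin n → ℝ := fun i => if yhat i ≥ -η then 1 else 0
  have hlt : ∀ i, (if yhat i < -η then (1:ℝ) else 0) = 1 - hard i := fun i => by
    by_cases h : yhat i ≥ -η <;> simp [hard, h]
  have hsoft : Tendsto (fun β i => S (yhat i) β η) atTop (𝓝 hard) :=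
    tendsto_pi_nhds.2 fun i => tendsto_S_atTop (hne i)
  have hy₀ : ∀ i, 0 ≤ y i := fun i => by rcases hy i with h | h <;> simp [h]
  have hy₁ : ∀ i, y i ≤ 1 := fun i => by rcases hy i with h | h <;> simp [h]
  have hden := f1Score_denom_pos (c := hard) (fun i => by positivity) hy₀ hy₁ hpos
  simp only [hlt]
  exact (continuousAt_f1Score y hden.ne').tendsto.comp hsoft
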